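/- Let F and B be n × n column-stochastic matrices, let 0 < α₁, α₂, α₃ < 1, and for d ∈ ℝⁿ let R(d) denote the unique solution t of the RepRank equation t = α₁ F P₊(t) + α₂ B P₋(t) + α₃ d. Then R is Lipschitz continuous in the ℓ¹ norm with constant α₃ / (1 − max(α₁, α₂)): for all d₁, d₂ ∈ ℝⁿ, ‖R(d₁) − R(d₂)‖₁ ≤ (α₃ / (1 − max(α₁, α₂))) ‖d₁ − d₂‖₁. -/

import Mathlib

/-!
The difference of two RepRank solutions satisfies
`t - s = α₁ F (P₊ t - P₊ s) + α₂ B (P₋ t - P₋ s) + α₃ (d₁ - d₂)`.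
Column-stochastic matrices do not increase the ℓ¹ norm, and `P₊` and `P₋` split the ℓ¹
distance of `t` and `s` exactly, so the first two terms have ℓ¹ norm at most
`max α₁ α₂ · ‖t - s‖₁`; solving the resulting inequality for `‖t - s‖₁` gives the bound.
-/

open Finset Filter

/-- Replace negative components by zero. -/
def Ppos {n : ℕ} (t : Fin n → ℝ) : Fin n → ℝ := fun i => max (t i) 0

/-- Replace positive components by zero. -/
def Pneg {n : ℕ} (t : Fin n → ℝ) : Fin n → ℝ := fun i => min (t i) 0

/-- ℓ¹ norm on ℝⁿ. -/
def l1 {n : ℕ} (x : Fin n → ℝ) : ℝ := ∑ i, |x i|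

/-- A matrix is column-stochastic if entries are nonnegative and each column sums to 1. -/
def ColStochastic {n : ℕ} (F : Matrix (Fin n) (Fin n) ℝ) : Prop :=
  (∀ i j, 0 ≤ F i j) ∧ ∀ j, ∑ i, F i j = 1

open Matrix

section RepRank

variable {n : ℕ}

lemma l1_nonneg (x : Fin n → ℝ) : 0 ≤ l1 x :=
  sum_nonneg fun _ _ => abs_nonneg _

lemma l1_add_le (x y : Fin n → ℝ) : l1 (x + y) ≤ l1 x + l1 y := by
  rw [l1, l1, l1, ← sum_add_distrib]
  exact sum_le_sum fun _ _ => abs_add_le _ _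

lemma l1_smul_of_nonneg {c : ℝ} (hc : 0 ≤ c) (x : Fin n → ℝ) : l1 (c • x) = c * l1 x := by
  simp only [l1, mul_sum, Pi.smul_apply, smul_eq_mul, abs_mul, abs_of_nonneg hc]

lemma ColStochastic.l1_mulVec_le {F : Matrix (Fin n) (Fin n) ℝ} (hF : ColStochastic F)
    (x : Fin n → ℝ) : l1 (F *ᵥ x) ≤ l1 x :=
  calc l1 (F *ᵥ x) ≤ ∑ i, ∑ j, F i j * |x j| := by
        refine sum_le_sum fun i _ => (abs_sum_le_sum_abs (fun j => F i j * x j) univ).trans_eq ?_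
        simp only [abs_mul, abs_of_nonneg (hF.1 i _)]
    _ = ∑ j, (∑ i, F i j) * |x j| := by
        rw [sum_comm]
        simp only [sum_mul]
    _ = l1 x := by simp only [hF.2, one_mul, l1]

lemma abs_max_sub_max_add_abs_min_sub_min (a b : ℝ) :
    |max a 0 - max b 0| + |min a 0 - min b 0| = |a - b| := by
  rcases le_total a 0 with ha | ha <;> rcases le_total b 0 with hb | hb <;>
    simp only [max_eq_left, max_eq_right, min_eq_left, min_eq_right, ha, hb] <;>
    simp only [sub_zero, zero_sub, sub_self, abs_neg, abs_zero, zero_add, add_zero]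
  · rw [abs_of_nonneg hb, abs_of_nonpos ha, abs_of_nonpos (by linarith : a - b ≤ 0)]
    ring
  · rw [abs_of_nonneg ha, abs_of_nonpos hb, abs_of_nonneg (by linarith : 0 ≤ a - b)]
    ring

lemma l1_Ppos_sub_add_l1_Pneg_sub (t s : Fin n → ℝ) :
    l1 (Ppos t - Ppos s) + l1 (Pneg t - Pneg s) = l1 (t - s) := by
  rw [l1, l1, l1, ← sum_add_distrib]
  exact sum_congr rfl fun i _ => abs_max_sub_max_add_abs_min_sub_min (t i) (s i)

lemma l1_repRank_part_sub_le {F B : Matrix (Fin n) (Fin n) ℝ} (hF : ColStochastic F)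
    (hB : ColStochastic B) {α₁ α₂ M : ℝ} (hα₁ : 0 ≤ α₁) (hα₂ : 0 ≤ α₂)
    (hα₁M : α₁ ≤ M) (hα₂M : α₂ ≤ M) (t s : Fin n → ℝ) :
    l1 (α₁ • (F *ᵥ (Ppos t - Ppos s)) + α₂ • (B *ᵥ (Pneg t - Pneg s))) ≤ M * l1 (t - s) := by
  calc _ ≤ α₁ * l1 (F *ᵥ (Ppos t - Ppos s)) + α₂ * l1 (B *ᵥ (Pneg t - Pneg s)) := by
        rw [← l1_smul_of_nonneg hα₁, ← l1_smul_of_nonneg hα₂]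
        exact l1_add_le _ _
    _ ≤ α₁ * l1 (Ppos t - Ppos s) + α₂ * l1 (Pneg t - Pneg s) := by
        gcongr
        exacts [hF.l1_mulVec_le _, hB.l1_mulVec_le _]
    _ ≤ M * l1 (Ppos t - Ppos s) + M * l1 (Pneg t - Pneg s) := by
        gcongr <;> exact l1_nonneg _
    _ = M * l1 (t - s) := by rw [← mul_add, l1_Ppos_sub_add_l1_Pneg_sub]

lemma repRank_sub_eq {F B : Matrix (Fin n) (Fin n) ℝ} {α₁ α₂ α₃ : ℝ} {t s d₁ d₂ : Fin n → ℝ}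
    (ht : t = α₁ • F *ᵥ Ppos t + α₂ • B *ᵥ Pneg t + α₃ • d₁)
    (hs : s = α₁ • F *ᵥ Ppos s + α₂ • B *ᵥ Pneg s + α₃ • d₂) :
    t - s = (α₁ • (F *ᵥ (Ppos t - Ppos s)) + α₂ • (B *ᵥ (Pneg t - Pneg s))) +
      α₃ • (d₁ - d₂) := by
  conv_lhs => rw [ht, hs]
  simp only [Matrix.mulVec_sub, smul_sub]
  abel

lemma l1_sub_le_of_repRank_eq {F B : Matrix (Fin n) (Fin n) ℝ} (hF : ColStochastic F)
    (hB : ColStochastic B) {α₁ α₂ α₃ : ℝ} (hα₁ : 0 ≤ α₁) (hα₂ : 0 ≤ α₂) (hα₃ : 0 ≤ α₃)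
    {t s d₁ d₂ : Fin n → ℝ}
    (ht : t = α₁ • F *ᵥ Ppos t + α₂ • B *ᵥ Pneg t + α₃ • d₁)
    (hs : s = α₁ • F *ᵥ Ppos s + α₂ • B *ᵥ Pneg s + α₃ • d₂) :
    l1 (t - s) ≤ max α₁ α₂ * l1 (t - s) + α₃ * l1 (d₁ - d₂) := by
  calc l1 (t - s) ≤ _ := repRank_sub_eq ht hs ▸ l1_add_le _ _
    _ ≤ _ := by
      rw [l1_smul_of_nonneg hα₃]
      gcongr
      exact l1_repRank_part_sub_le hF hB hα₁ hα₂ (le_max_left _ _) (le_max_right _ _) t s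

end RepRank

theorem repRank_lipschitz_general {n : ℕ} (F B : Matrix (Fin n) (Fin n) ℝ)
    (hF : ColStochastic F) (hB : ColStochastic B)
    (α₁ α₂ α₃ : ℝ) (hα₁ : 0 < α₁) (hα₁' : α₁ < 1) (hα₂ : 0 < α₂) (hα₂' : α₂ < 1)
    (hα₃ : 0 < α₃)
    (R : (Fin n → ℝ) → (Fin n → ℝ))
    (hR : ∀ d, R d = α₁ • F.mulVec (Ppos (R d)) + α₂ • B.mulVec (Pneg (R d)) + α₃ • d)
    (d₁ d₂ : Fin n → ℝ) :
    l1 (R d₁ - R d₂) ≤ (α₃ / (1 - max α₁ α₂)) * l1 (d₁ - d₂) := by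
  have hbound := l1_sub_le_of_repRank_eq hF hB hα₁.le hα₂.le hα₃.le (hR d₁) (hR d₂)
  have hgap : 0 < 1 - max α₁ α₂ := sub_pos.mpr (max_lt hα₁' hα₂')
  rw [div_mul_eq_mul_div, le_div_iff₀ hgap]
  linarith

theorem repRank_lipschitz {n : ℕ} (F B : Matrix (Fin n) (Fin n) ℝ)
    (hF : ColStochastic F) (hB : ColStochastic B)
    (α₁ α₂ α₃ : ℝ) (hα₁ : 0 < α₁) (hα₁' : α₁ < 1) (hα₂ : 0 < α₂) (hα₂' : α₂ < 1)
    (hα₃ : 0 < α₃) (hα₃' : α₃ < 1)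
    (R : (Fin n → ℝ) → (Fin n → ℝ))
    (hR : ∀ d, R d = α₁ • F.mulVec (Ppos (R d)) + α₂ • B.mulVec (Pneg (R d)) + α₃ • d)
    (d₁ d₂ : Fin n → ℝ) :
    l1 (R d₁ - R d₂) ≤ (α₃ / (1 - max α₁ α₂)) * l1 (d₁ - d₂) :=
  repRank_lipschitz_general F B hF hB α₁ α₂ α₃ hα₁ hα₁' hα₂ hα₂' hα₃ R hR d₁ d₂
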